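/- arXiv:1707.01182 — 5 statements merged into one kernel-verified Lean document; each statement's English description precedes it below -/
import Mathlib

section
/- Let U be a positive integer, let p : Fin U → ℝ satisfy 0 < p i ≤ 1 for all i and ∑ i, p i = 1, let pr : Fin U → Fin U be any function, and let q : Fin U → ℝ satisfy p i ≤ q (pr i) and q (pr i) ≤ 1 for all i. Then ∑ i, p i * Real.sqrt (Real.logb 2 (1/(q (pr i)))) ≤ Real.sqrt (∑ i, p i * Real.logb 2 (1/(p i))). -/
theorem biased_pred_expected_sqrt_entropy (U : ℕ) (hU : 0 < U) (p : Fin U → ℝ)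
    (hp : ∀ i, 0 < p i ∧ p i ≤ 1) (hsum : ∑ i, p i = 1)
    (pr : Fin U → Fin U) (q : Fin U → ℝ)
    (hq : ∀ i, p i ≤ q (pr i) ∧ q (pr i) ≤ 1) :
    ∑ i, p i * Real.sqrt (Real.logb 2 (1/(q (pr i)))) ≤
      Real.sqrt (∑ i, p i * Real.logb 2 (1/(p i))) := by
  set x : Fin U → ℝ := fun i => Real.logb 2 (1/(q (pr i))) with hx
  have hq0 : ∀ i, 0 < q (pr i) := fun i => lt_of_lt_of_le (hp i).1 (hq i).1
  have hx0 : ∀ i, 0 ≤ x i := fun i =>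
    Real.logb_nonneg (by norm_num) (one_le_one_div (hq0 i) (hq i).2)
  have hpx : ∀ i, 0 ≤ p i * x i := fun i => mul_nonneg (hp i).1.le (hx0 i)
  have hcs : ∑ i, p i * Real.sqrt (x i) ≤ Real.sqrt (∑ i, p i * x i) := by
    have h1 : ∀ i : Fin U, p i * Real.sqrt (x i)
        = Real.sqrt (p i) * Real.sqrt (p i * x i) := by
      intro i
      rw [Real.sqrt_mul (hp i).1.le, ← mul_assoc,
        Real.mul_self_sqrt (hp i).1.le]
    rw [Finset.sum_congr rfl (fun i _ => h1 i)]
    have h2 := Finset.sum_sq_le_sum_mul_sum_of_sq_eq_mul Finset.univ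
      (r := fun i => Real.sqrt (p i) * Real.sqrt (p i * x i))
      (f := p) (g := fun i => p i * x i)
      (fun i _ => (hp i).1.le) (fun i _ => hpx i)
      (fun i _ => by
        rw [mul_pow, Real.sq_sqrt (hp i).1.le, Real.sq_sqrt (hpx i)])
    rw [hsum, one_mul] at h2
    have hnn : 0 ≤ ∑ i, Real.sqrt (p i) * Real.sqrt (p i * x i) :=
      Finset.sum_nonneg fun i _ => mul_nonneg (Real.sqrt_nonneg _) (Real.sqrt_nonneg _)
    exact (Real.le_sqrt hnn (Finset.sum_nonneg fun i _ => hpx i)).mpr h2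
  refine hcs.trans (Real.sqrt_le_sqrt ?_)
  apply Finset.sum_le_sum
  intro i _
  refine mul_le_mul_of_nonneg_left ?_ (hp i).1.le
  exact Real.logb_le_logb_of_le (by norm_num)
    (one_div_pos.mpr (hq0 i)) (one_div_le_one_div_of_le (hp i).1 (hq i).1)
end

section
/- There exists a constant C > 0 such that for every natural number j ≥ 1 and every real number q with 0 < q ≤ 2^(−(2^(j−1) : ℝ)), ∑_{k=1}^{j} Real.sqrt ((2^k : ℝ)/k) ≤ C * Real.sqrt (Real.logb 2 (1/q)). -/
lemma sqrt_two_pow (k : ℕ) : Real.sqrt ((2:ℝ)^k) = Real.sqrt 2 ^ k := by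
  induction k with
  | zero => simp
  | succ n ih =>
    rw [pow_succ, pow_succ, Real.sqrt_mul (by positivity), ih]

lemma sqrt2_ge : (1.4:ℝ) ≤ Real.sqrt 2 := by
  nlinarith [Real.sq_sqrt (by norm_num : (0:ℝ) ≤ 2), Real.sqrt_nonneg 2]

lemma geom_sqrt2_sum_le (j : ℕ) :
    ∑ k ∈ Finset.Icc 1 j, Real.sqrt 2 ^ k ≤ 4 * Real.sqrt 2 ^ j - 4 := by
  induction j with
  | zero => simp
  | succ n ih =>
    rw [Finset.sum_Icc_succ_top (by omega)]
    have hpos : (0:ℝ) < Real.sqrt 2 ^ n := pow_pos (by positivity) n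
    have h14 := sqrt2_ge
    rw [pow_succ]
    nlinarith

lemma term_le (k : ℕ) (hk : 1 ≤ k) :
    Real.sqrt ((2^k : ℝ)/(k : ℝ)) ≤ Real.sqrt 2 ^ k := by
  have hk1 : (1:ℝ) ≤ (k:ℝ) := by exact_mod_cast hk
  have h1 : (2^k : ℝ)/(k : ℝ) ≤ (2:ℝ)^k := by
    rw [div_le_iff₀ (by linarith)]
    nlinarith [pow_pos (by norm_num : (0:ℝ) < 2) k]
  calc Real.sqrt ((2^k : ℝ)/(k : ℝ)) ≤ Real.sqrt ((2:ℝ)^k) := Real.sqrt_le_sqrt h1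
    _ = Real.sqrt 2 ^ k := sqrt_two_pow k

theorem biased_pred_level_sum_le_sqrt_log :
    ∃ C : ℝ, 0 < C ∧ ∀ j : ℕ, 1 ≤ j → ∀ q : ℝ, 0 < q →
      q ≤ (2:ℝ) ^ (-((2^(j-1) : ℕ) : ℝ)) →
      ∑ k ∈ Finset.Icc 1 j, Real.sqrt ((2^k : ℝ)/(k : ℝ)) ≤
        C * Real.sqrt (Real.logb 2 (1/q)) := by
  refine ⟨6, by norm_num, ?_⟩
  intro j hj q hq hqle
  obtain ⟨m, rfl⟩ : ∃ m, j = m + 1 := ⟨j - 1, by omega⟩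
  have hm1 : m + 1 - 1 = m := by omega
  rw [hm1] at hqle
  set e : ℝ := ((2^m : ℕ) : ℝ) with he
  have hp : (0:ℝ) < (2:ℝ) ^ e := Real.rpow_pos_of_pos (by norm_num) e
  have h2e : (2:ℝ) ^ e ≤ 1/q := by
    rw [Real.rpow_neg (by norm_num : (0:ℝ) ≤ 2)] at hqle
    have h1 : q * (2:ℝ)^e ≤ 1 := by
      calc q * (2:ℝ)^e ≤ ((2:ℝ)^e)⁻¹ * (2:ℝ)^e :=
            mul_le_mul_of_nonneg_right hqle hp.le
        _ = 1 := inv_mul_cancel₀ (ne_of_gt hp)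
    rw [le_div_iff₀ hq]
    linarith [h1, mul_comm q ((2:ℝ)^e)]
  have hlog : e ≤ Real.logb 2 (1/q) := by
    rw [Real.le_logb_iff_rpow_le (by norm_num) (by positivity)]
    exact h2e
  have hsqrt : Real.sqrt e ≤ Real.sqrt (Real.logb 2 (1/q)) := Real.sqrt_le_sqrt hlog
  have hse : Real.sqrt e = Real.sqrt 2 ^ m := by
    rw [he]; push_cast; exact sqrt_two_pow m
  have hsum : ∑ k ∈ Finset.Icc 1 (m+1), Real.sqrt ((2^k : ℝ)/(k : ℝ))
      ≤ 4 * Real.sqrt 2 ^ (m+1) := by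
    calc ∑ k ∈ Finset.Icc 1 (m+1), Real.sqrt ((2^k : ℝ)/(k : ℝ))
        ≤ ∑ k ∈ Finset.Icc 1 (m+1), Real.sqrt 2 ^ k :=
          Finset.sum_le_sum fun k hk => term_le k (Finset.mem_Icc.mp hk).1
      _ ≤ 4 * Real.sqrt 2 ^ (m+1) - 4 := geom_sqrt2_sum_le (m+1)
      _ ≤ 4 * Real.sqrt 2 ^ (m+1) := by linarith
  have hpm : (0:ℝ) < Real.sqrt 2 ^ m := pow_pos (by positivity) m
  have hkey : 4 * Real.sqrt 2 ^ (m+1) ≤ 6 * Real.sqrt 2 ^ m := by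
    rw [pow_succ]
    nlinarith [sqrt2_ge, Real.sq_sqrt (by norm_num : (0:ℝ) ≤ 2)]
  calc ∑ k ∈ Finset.Icc 1 (m+1), Real.sqrt ((2^k : ℝ)/(k : ℝ))
      ≤ 4 * Real.sqrt 2 ^ (m+1) := hsum
    _ ≤ 6 * Real.sqrt 2 ^ m := hkey
    _ = 6 * Real.sqrt e := by rw [hse]
    _ ≤ 6 * Real.sqrt (Real.logb 2 (1/q)) := by linarith
end

section
/- There exists a constant C > 0 such that for every natural number j ≥ 1 and every natural number w with 2^(2^(j−1)) ≤ w, ∑_{k=1}^{j} Real.sqrt ((2^k : ℝ)/k) ≤ C * Real.sqrt (Real.logb 2 (w : ℝ)). -/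
/-!
The `k`-th term `√(2^k / k)` is at most `√2 ^ k`, so the sum is dominated by a geometric series
with ratio `√2` and hence by a constant multiple of its last term `√2 ^ j`. On the other side,
`2 ^ (2 ^ (j - 1)) ≤ w` gives `2 ^ (j - 1) ≤ log₂ w`, i.e. `√2 ^ (j - 1) ≤ √(log₂ w)`.
-/

open Finset Real

lemma sum_Icc_pow_le_div {x : ℝ} (hx : 1 < x) (n : ℕ) :
    ∑ k ∈ Icc 1 n, x ^ k ≤ x ^ (n + 1) / (x - 1) := by
  rw [← Ico_add_one_right_eq_Icc, geom_sum_Ico hx.ne' (by omega), pow_one]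
  gcongr; linarith

lemma sq_sqrt_two_pow (k : ℕ) : (√2 ^ k) ^ 2 = 2 ^ k := by
  rw [← pow_mul, mul_comm, pow_mul, sq_sqrt zero_le_two]

lemma sqrt_two_pow_div_le {k : ℕ} (hk : 1 ≤ k) : √((2 : ℝ) ^ k / k) ≤ √2 ^ k := by
  rw [sqrt_le_iff, sq_sqrt_two_pow]
  exact ⟨by positivity, div_le_self (by positivity) (by exact_mod_cast hk)⟩

lemma sum_sqrt_two_pow_div_le (n : ℕ) :
    ∑ k ∈ Icc 1 n, √((2 : ℝ) ^ k / k) ≤ √2 ^ (n + 1) / (√2 - 1) :=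
  (sum_le_sum fun _ hk ↦ sqrt_two_pow_div_le (mem_Icc.mp hk).1).trans
    (sum_Icc_pow_le_div one_lt_sqrt_two n)

lemma natCast_le_logb_of_pow_le {b : ℕ} (hb : 1 < b) {n w : ℕ} (h : b ^ n ≤ w) :
    (n : ℝ) ≤ logb b w := by
  have hw : (0 : ℝ) < w := by exact_mod_cast (Nat.pow_pos (by omega)).trans_le h
  rw [le_logb_iff_rpow_le (by exact_mod_cast hb) hw, rpow_natCast]
  exact_mod_cast h

lemma sqrt_two_pow_le_sqrt_logb {m w : ℕ} (h : 2 ^ 2 ^ m ≤ w) :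
    √2 ^ m ≤ √(logb 2 w) := by
  rw [le_sqrt' (by positivity), sq_sqrt_two_pow]
  exact_mod_cast natCast_le_logb_of_pow_le one_lt_two h

theorem biased_pred_working_set_bound :
    ∃ C : ℝ, 0 < C ∧ ∀ j : ℕ, 1 ≤ j → ∀ w : ℕ, 2^(2^(j-1)) ≤ w →
      ∑ k ∈ Finset.Icc 1 j, Real.sqrt ((2^k : ℝ)/(k : ℝ)) ≤
        C * Real.sqrt (Real.logb 2 (w : ℝ)) := by
  have hden : 0 < √2 - 1 := sub_pos.mpr one_lt_sqrt_two
  refine ⟨2 / (√2 - 1), by positivity, fun j hj w hw ↦ ?_⟩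
  obtain ⟨m, rfl⟩ : ∃ m, j = m + 1 := ⟨j - 1, by omega⟩
  rw [Nat.add_sub_cancel] at hw
  calc ∑ k ∈ Icc 1 (m + 1), √((2 : ℝ) ^ k / k)
      ≤ √2 ^ (m + 2) / (√2 - 1) := sum_sqrt_two_pow_div_le (m + 1)
    _ = 2 / (√2 - 1) * √2 ^ m := by
      rw [pow_add, mul_comm, sq_sqrt zero_le_two]; ring
    _ ≤ 2 / (√2 - 1) * √(logb 2 w) := by
      gcongr; exact sqrt_two_pow_le_sqrt_logb hw
end

section
/- Let U ≥ 2 be an integer, let ε be a real number with 0 < ε ≤ 1 and (U : ℝ)^ε ≥ 2, and let p : Fin U → ℝ satisfy 0 < p i ≤ 1 for all i and ∑ i, p i = 1. Let H = ∑ i, p i * Real.logb 2 (1/(p i)). Then ∑_{i : p i < ((U:ℝ))⁻¹ ^ ε} p i * Real.logb 2 (Real.logb 2 U) ≤ Real.logb 2 (1/ε) + Real.logb 2 (H + 2). -/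
set_option maxHeartbeats 1000000 in

theorem biased_pred_expected_time_theorem1 (U : ℕ) (hU : 2 ≤ U)
    (ε : ℝ) (hε0 : 0 < ε) (hε1 : ε ≤ 1) (hUε : 2 ≤ (U : ℝ) ^ ε)
    (p : Fin U → ℝ) (hp : ∀ i, 0 < p i ∧ p i ≤ 1) (hsum : ∑ i, p i = 1)
    (H : ℝ) (hH : H = ∑ i, p i * Real.logb 2 (1/(p i))) :
    ∑ i ∈ Finset.univ.filter (fun i : Fin U => p i < ((U : ℝ))⁻¹ ^ ε),
        p i * Real.logb 2 (Real.logb 2 U) ≤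
      Real.logb 2 (1/ε) + Real.logb 2 (H + 2) := by
  have h2 : (1:ℝ) < 2 := one_lt_two
  have hl2 : 0 < Real.log 2 := Real.log_pos h2
  have hU2 : (2:ℝ) ≤ (U:ℝ) := by exact_mod_cast hU
  have hU0 : (0:ℝ) < U := by linarith
  set L : ℝ := Real.logb 2 (U:ℝ) with hLdef
  have hL1 : 1 ≤ L := by
    rw [hLdef, show (1:ℝ) = Real.logb 2 2 by simp]
    exact Real.logb_le_logb_of_le h2 (by norm_num) hU2
  have hL0 : 0 < L := by linarith
  have hUεlog : Real.logb 2 ((U:ℝ) ^ ε) = ε * L := by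
    rw [hLdef, Real.logb_rpow_eq_mul_logb_of_pos hU0]
  have hεL : 1 ≤ ε * L := by
    rw [← hUεlog, show (1:ℝ) = Real.logb 2 2 by simp]
    exact Real.logb_le_logb_of_le h2 (by norm_num) hUε
  have hεL0 : 0 < ε * L := by linarith
  set S := Finset.univ.filter (fun i : Fin U => p i < ((U : ℝ))⁻¹ ^ ε) with hS
  set s := ∑ i ∈ S, p i with hs
  have hterm : ∀ i : Fin U, 0 ≤ p i * Real.logb 2 (1/(p i)) := by
    intro i
    refine mul_nonneg (hp i).1.le (Real.logb_nonneg h2 ?_)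
    rw [le_div_iff₀ (hp i).1]
    simpa using (hp i).2
  have hs0 : 0 ≤ s := Finset.sum_nonneg fun i _ => (hp i).1.le
  have hs1 : s ≤ 1 := by
    rw [hs, ← hsum]
    exact Finset.sum_le_sum_of_subset_of_nonneg (Finset.filter_subset _ _)
      (fun i _ _ => (hp i).1.le)
  have hH0 : 0 ≤ H := by
    rw [hH]; exact Finset.sum_nonneg fun i _ => hterm i
  have hkey : s * (ε * L) ≤ H := by
    rw [hH]
    calc s * (ε * L) = ∑ i ∈ S, p i * (ε * L) := by rw [hs, Finset.sum_mul]
    _ ≤ ∑ i ∈ S, p i * Real.logb 2 (1/(p i)) := by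
        apply Finset.sum_le_sum
        intro i hi
        have hpi := (hp i).1
        have hmem : p i < ((U:ℝ))⁻¹ ^ ε := (Finset.mem_filter.mp hi).2
        have hinv : ((U:ℝ))⁻¹ ^ ε = ((U:ℝ) ^ ε)⁻¹ := Real.inv_rpow hU0.le ε
        have h1p : (U:ℝ) ^ ε ≤ 1 / p i := by
          rw [le_div_iff₀ hpi]
          rw [hinv] at hmem
          calc (U:ℝ)^ε * p i ≤ (U:ℝ)^ε * ((U:ℝ)^ε)⁻¹ :=
                mul_le_mul_of_nonneg_left hmem.le (Real.rpow_nonneg hU0.le ε)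
          _ = 1 := mul_inv_cancel₀ (by positivity)
        refine mul_le_mul_of_nonneg_left ?_ hpi.le
        rw [← hUεlog]
        exact Real.logb_le_logb_of_le h2 (by positivity) h1p
    _ ≤ ∑ i, p i * Real.logb 2 (1/(p i)) := Finset.sum_le_sum_of_subset_of_nonneg
        (Finset.filter_subset _ _) (fun i _ _ => hterm i)
  set C : ℝ := Real.logb 2 L with hCdef
  have hC0 : 0 ≤ C := Real.logb_nonneg h2 hL1
  have hLHS : ∑ i ∈ S, p i * C = s * C := by rw [hs, Finset.sum_mul]
  rw [hLHS]
  set L₀ : ℝ := (H + 2) / ε with hL₀def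
  have hL₀2 : 2 ≤ L₀ := by
    rw [hL₀def, le_div_iff₀ hε0]; nlinarith
  have hL₀0 : 0 < L₀ := by linarith
  have hRHS : Real.logb 2 (1/ε) + Real.logb 2 (H+2) = Real.logb 2 L₀ := by
    rw [← Real.logb_mul (by positivity) (by positivity), hL₀def]
    congr 1; field_simp
  rw [hRHS]
  have hlogL₀1 : 1 ≤ Real.logb 2 L₀ := by
    rw [show (1:ℝ) = Real.logb 2 2 by simp]
    exact Real.logb_le_logb_of_le h2 (by norm_num) hL₀2
  by_cases hcase : L ≤ L₀
  · calc s * C ≤ 1 * C := mul_le_mul_of_nonneg_right hs1 hC0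
    _ = Real.logb 2 L := by rw [one_mul, hCdef]
    _ ≤ Real.logb 2 L₀ := Real.logb_le_logb_of_le h2 hL0 hcase
  · push_neg at hcase
    have hsH : s ≤ H / (ε * L) := by rw [le_div_iff₀ hεL0]; exact hkey
    have step1 : s * C ≤ (H / (ε * L)) * C := mul_le_mul_of_nonneg_right hsH hC0
    by_cases hcase2 : Real.exp 1 ≤ L₀
    · have hanti : Real.log L / L ≤ Real.log L₀ / L₀ :=
        Real.log_div_self_antitoneOn hcase2 (le_trans hcase2 hcase.le) hcase.le
      calc s * C ≤ (H / (ε * L)) * C := step1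
      _ = (H / (ε * Real.log 2)) * (Real.log L / L) := by
          rw [hCdef, Real.logb, div_mul_div_comm, div_mul_div_comm]; ring_nf
      _ ≤ (H / (ε * Real.log 2)) * (Real.log L₀ / L₀) :=
          mul_le_mul_of_nonneg_left hanti (by positivity)
      _ = (H / (H + 2)) * Real.logb 2 L₀ := by
          have hεL₀ : ε * L₀ = H + 2 := by rw [hL₀def]; field_simp
          rw [Real.logb, div_mul_div_comm, div_mul_div_comm, ← hεL₀]; ring_nf
      _ ≤ 1 * Real.logb 2 L₀ := by
          refine mul_le_mul_of_nonneg_right ?_ (by linarith)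
          rw [div_le_one (by linarith)]; linarith
      _ = Real.logb 2 L₀ := one_mul _
    · push_neg at hcase2
      have he0 : (0:ℝ) < Real.exp 1 := Real.exp_pos 1
      have hlogL : Real.log L ≤ L / Real.exp 1 := by
        have h := Real.log_le_sub_one_of_pos (x := L / Real.exp 1) (by positivity)
        rw [Real.log_div (ne_of_gt hL0) (Real.exp_ne_zero 1), Real.log_exp] at h
        linarith
      have hHe : H + 2 < ε * Real.exp 1 := by
        have : ε * L₀ = H + 2 := by rw [hL₀def]; field_simp
        nlinarith [mul_lt_mul_of_pos_left hcase2 hε0]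
      have hnum : Real.exp 1 - 2 ≤ Real.exp 1 * Real.log 2 := by
        nlinarith [Real.exp_one_lt_d9, Real.log_two_gt_d9]
      calc s * C ≤ (H / (ε * L)) * C := step1
      _ = (H / (ε * Real.log 2)) * (Real.log L / L) := by
          rw [hCdef, Real.logb, div_mul_div_comm, div_mul_div_comm]; ring_nf
      _ ≤ (H / (ε * Real.log 2)) * ((L / Real.exp 1) / L) := by
          refine mul_le_mul_of_nonneg_left ?_ (by positivity)
          gcongr
      _ = H / (ε * Real.exp 1 * Real.log 2) := by
          have hLe : (L / Real.exp 1) / L = 1 / Real.exp 1 := by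
            rw [div_div, mul_comm, ← div_div, div_self (ne_of_gt hL0)]
          rw [hLe, div_mul_div_comm, mul_one]; ring_nf
      _ ≤ 1 := by
          have hd : 0 < ε * Real.exp 1 * Real.log 2 := by positivity
          rw [div_le_one hd]
          nlinarith [mul_le_mul_of_nonneg_left hnum hε0.le]
      _ ≤ Real.logb 2 L₀ := hlogL₀1
end

section
/- Let U ≥ 2 be an integer, let ε be a real number with 0 < ε ≤ 1, and let p : Fin U → ℝ satisfy 0 < p i ≤ 1 for all i and ∑ i, p i = 1. Let H = ∑ i, p i * Real.logb 2 (1/(p i)). Then ∑_{i : p i < 2^(−(Real.logb 2 (U:ℝ))^ε)} p i * Real.logb 2 (Real.logb 2 U) ≤ (1/ε) * Real.logb 2 (H + 2). -/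
theorem biased_pred_expected_time_theorem2 (U : ℕ) (hU : 2 ≤ U)
    (ε : ℝ) (hε0 : 0 < ε) (hε1 : ε ≤ 1)
    (p : Fin U → ℝ) (hp : ∀ i, 0 < p i ∧ p i ≤ 1) (hsum : ∑ i, p i = 1)
    (H : ℝ) (hH : H = ∑ i, p i * Real.logb 2 (1/(p i))) :
    ∑ i ∈ Finset.univ.filter
        (fun i : Fin U => p i < (2:ℝ) ^ (-(Real.logb 2 (U : ℝ)) ^ ε)),
        p i * Real.logb 2 (Real.logb 2 U) ≤
      (1/ε) * Real.logb 2 (H + 2) := by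
  set L : ℝ := Real.logb 2 (U : ℝ) with hLdef
  have hU2 : (2:ℝ) ≤ (U:ℝ) := by exact_mod_cast hU
  have hL1 : 1 ≤ L := by
    have : Real.logb 2 2 ≤ Real.logb 2 (U:ℝ) :=
      Real.logb_le_logb_of_le one_lt_two (by norm_num) hU2
    simpa [Real.logb_self_eq_one] using this
  set t : ℝ := L ^ ε with htdef
  have ht1 : 1 ≤ t := Real.one_le_rpow hL1 hε0.le
  set S := Finset.univ.filter
      (fun i : Fin U => p i < (2:ℝ) ^ (-(Real.logb 2 (U : ℝ)) ^ ε)) with hS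
  set q : ℝ := ∑ i ∈ S, p i with hq
  have hq0 : 0 ≤ q := Finset.sum_nonneg fun i _ => (hp i).1.le
  have hq1 : q ≤ 1 := by
    rw [← hsum]
    exact Finset.sum_le_sum_of_subset_of_nonneg (Finset.subset_univ S)
      (fun i _ _ => (hp i).1.le)
  have hterm : ∀ i : Fin U, 0 ≤ p i * Real.logb 2 (1/(p i)) := by
    intro i
    apply mul_nonneg (hp i).1.le
    apply Real.logb_nonneg one_lt_two
    exact one_le_one_div (hp i).1 (hp i).2
  have hH0 : 0 ≤ H := hH ▸ Finset.sum_nonneg fun i _ => hterm i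
  have hqt : q * t ≤ H := by
    have h1 : ∑ i ∈ S, p i * t ≤ ∑ i ∈ S, p i * Real.logb 2 (1/(p i)) := by
      apply Finset.sum_le_sum
      intro i hi
      apply mul_le_mul_of_nonneg_left _ (hp i).1.le
      have hpi : p i < (2:ℝ) ^ (-t) := by
        have := (Finset.mem_filter.mp hi).2
        simpa [htdef, hLdef] using this
      have hlog : Real.logb 2 (p i) < -t := by
        calc Real.logb 2 (p i) < Real.logb 2 ((2:ℝ) ^ (-t)) :=
              Real.logb_lt_logb one_lt_two (hp i).1 hpi
          _ = -t := Real.logb_rpow (by norm_num) (by norm_num)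
      rw [one_div, Real.logb_inv]
      linarith
    have h2 : ∑ i ∈ S, p i * Real.logb 2 (1/(p i)) ≤ H := by
      rw [hH]
      exact Finset.sum_le_sum_of_subset_of_nonneg (Finset.subset_univ S)
        (fun i _ _ => hterm i)
    calc q * t = ∑ i ∈ S, p i * t := by rw [hq, Finset.sum_mul]
      _ ≤ H := h1.trans h2
  have hRHS0 : 0 ≤ (1/ε) * Real.logb 2 (H + 2) := by
    apply mul_nonneg (by positivity)
    apply Real.logb_nonneg one_lt_two; linarith
  have hLHS : ∑ i ∈ S, p i * Real.logb 2 L = q * Real.logb 2 L := by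
    rw [hq, Finset.sum_mul]
  rw [hLHS]
  rcases le_or_gt (Real.logb 2 L) 0 with hlogL | hlogL
  · have : q * Real.logb 2 L ≤ 0 := mul_nonpos_of_nonneg_of_nonpos hq0 hlogL
    linarith
  · -- key: t^q ≤ 1 + q*(t-1) ≤ H + 2
    have hber : t ^ q ≤ 1 + q * (t - 1) := by
      have := rpow_one_add_le_one_add_mul_self (s := t - 1)
        (by linarith) hq0 hq1
      simpa using this
    have hpow : t ^ q ≤ H + 2 := by nlinarith
    have hlogt : Real.logb 2 (t ^ q) ≤ Real.logb 2 (H + 2) :=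
      Real.logb_le_logb_of_le one_lt_two (by positivity) hpow
    have ht0 : 0 < t := lt_of_lt_of_le one_pos ht1
    have hL0 : (0:ℝ) < L := lt_of_lt_of_le one_pos hL1
    have heq : Real.logb 2 (t ^ q) = ε * (q * Real.logb 2 L) := by
      rw [Real.logb_rpow_eq_mul_logb_of_pos ht0, htdef,
        Real.logb_rpow_eq_mul_logb_of_pos hL0]
      ring
    rw [heq] at hlogt
    have : q * Real.logb 2 L ≤ Real.logb 2 (H + 2) / ε :=
      (le_div_iff₀ hε0).mpr (by linarith [hlogt])
    calc q * Real.logb 2 L ≤ Real.logb 2 (H + 2) / ε := this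
      _ = (1/ε) * Real.logb 2 (H + 2) := by ring
end
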